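/- arXiv:2004.09099 — 4 statements merged into one kernel-verified Lean document; each statement's English description precedes it below -/
import Mathlib

section
/- If M is a matching in a graph G such that there is no augmenting path with respect to M of length at most 2k-3, then |M| ≥ ((k-1)/k)·|M_opt|, where M_opt is a maximum cardinality matching of G; i.e., M is a (k/(k-1))-approximate maximum matching. -/
open Finset

/-- `M` is a matching of `G`: every edge of `M` is an edge of `G` and no two
distinct edges of `M` share an endpoint. -/
def IsMatching {V : Type*} (G : SimpleGraph V) (M : Finset (Sym2 V)) : Prop :=
  (∀ e ∈ M, e ∈ G.edgeSet) ∧ ∀ e ∈ M, ∀ f ∈ M, e ≠ f → ∀ v : V, v ∈ e → v ∉ f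

/-- A vertex is free w.r.t. `M` if it lies on no edge of `M`. -/
def IsFree {V : Type*} (M : Finset (Sym2 V)) (v : V) : Prop := ∀ e ∈ M, v ∉ e

/-- `M` is a maximum-cardinality matching of `G`. -/
def IsMaximumMatching {V : Type*} (G : SimpleGraph V) (M : Finset (Sym2 V)) : Prop :=
  IsMatching G M ∧ ∀ M' : Finset (Sym2 V), IsMatching G M' → M'.card ≤ M.card

/-- `M` is a maximal matching of `G`: it is a matching and every edge of `G`
has at least one matched endpoint. -/
def IsMaximalMatching {V : Type*} (G : SimpleGraph V) (M : Finset (Sym2 V)) : Prop :=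
  IsMatching G M ∧ ∀ e ∈ G.edgeSet, ∃ v : V, v ∈ e ∧ ¬ IsFree M v

/-- `p` is an augmenting path w.r.t. `M`: a simple path of positive length
between two free vertices whose edges alternate, starting (and hence, since the
endpoints are free, also ending) with a non-matching edge. -/
def IsAugPath {V : Type*} (G : SimpleGraph V) (M : Finset (Sym2 V)) {a b : V}
    (p : G.Walk a b) : Prop :=
  p.IsPath ∧ 0 < p.length ∧ IsFree M a ∧ IsFree M b ∧
    ∀ (i : ℕ) (h : i < p.edges.length), p.edges.get ⟨i, h⟩ ∈ M ↔ Odd i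

/-!
From every vertex covered by `N` but not by `M`, follow a maximal walk whose edges alternate
between `N \ M` and `M`. Since `M` and `N` are matchings, two such walks through a common vertex
at positions of equal parity agree up to that point; so every walk is a path, the walks of even
length have distinct ends (covered by `M` but not by `N`), and a vertex covered by `M` sits at an
odd position of at most one walk. The walks of odd length are augmenting, hence have length at
least `2k - 1`, and their odd positions `1, 3, …, 2k - 3` give `(k - 1) · #(odd walks) ≤ 2|M|`.
Counting covered vertices, `2|N| - 2|M| ≤ #(odd walks)`.
-/

open SimpleGraph

section

variable {V : Type*} {G : SimpleGraph V} {M N : Finset (Sym2 V)}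

theorem IsMatching.eq_of_mem_of_mem (hM : IsMatching G M) {e f : Sym2 V} {v : V}
    (he : e ∈ M) (hf : f ∈ M) (hve : v ∈ e) (hvf : v ∈ f) : e = f :=
  by_contra fun hne => hM.2 e he f hf hne v hve hvf

section matchedVerts

variable [DecidableEq V]

def matchedVerts (M : Finset (Sym2 V)) : Finset V := M.biUnion Sym2.toFinset

theorem mem_matchedVerts {v : V} : v ∈ matchedVerts M ↔ ∃ e ∈ M, v ∈ e := by
  simp [matchedVerts, Sym2.mem_toFinset]

theorem isFree_iff_notMem_matchedVerts {v : V} : IsFree M v ↔ v ∉ matchedVerts M := by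
  simp [IsFree, mem_matchedVerts]

theorem IsMatching.card_matchedVerts (hM : IsMatching G M) : #(matchedVerts M) = 2 * #M := by
  rw [matchedVerts, card_biUnion, sum_const_nat (m := 2), mul_comm]
  · exact fun e he => Sym2.card_toFinset_of_not_isDiag e (G.not_isDiag_of_mem_edgeSet (hM.1 e he))
  · intro e he f hf hne
    simp only [Function.onFun, Finset.disjoint_left, Sym2.mem_toFinset]
    exact hM.2 e he f hf hne

end matchedVerts

def altSet (M N : Finset (Sym2 V)) (i : ℕ) : Set (Sym2 V) := if Even i then ↑N \ ↑M else ↑M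

def IsAltWalk (M N : Finset (Sym2 V)) {a c : V} (p : G.Walk a c) : Prop :=
  ∀ i < p.length, s(p.getVert i, p.getVert (i + 1)) ∈ altSet M N i

theorem altSet_of_even {i : ℕ} (hi : Even i) : altSet M N i = ↑N \ ↑M := if_pos hi

theorem altSet_of_odd {i : ℕ} (hi : Odd i) : altSet M N i = ↑M :=
  if_neg (Nat.not_even_iff_odd.2 hi)

theorem altSet_congr {i j : ℕ} (h : i % 2 = j % 2) : altSet M N i = altSet M N j := by
  simp only [altSet, Nat.even_iff, h]

theorem altSet_subset (i : ℕ) : altSet M N i ⊆ ↑M ∪ ↑N := by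
  unfold altSet; split_ifs
  · exact fun e he => Or.inr he.1
  · exact Set.subset_union_left

section matchings

variable (hM : IsMatching G M) (hN : IsMatching G N)
include hM hN

theorem eq_of_mem_altSet {i : ℕ} {e f : Sym2 V} {v : V} (he : e ∈ altSet M N i)
    (hf : f ∈ altSet M N i) (hve : v ∈ e) (hvf : v ∈ f) : e = f := by
  unfold altSet at he hf
  split_ifs at he hf
  · exact hN.eq_of_mem_of_mem he.1 hf.1 hve hvf
  · exact hM.eq_of_mem_of_mem he hf hve hvf

theorem adj_of_mem_altSet {i : ℕ} {v w : V} (h : s(v, w) ∈ altSet M N i) : G.Adj v w :=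
  (altSet_subset i h).elim (hM.1 _) (hN.1 _)

end matchings

namespace IsAltWalk

variable {a c : V} {p : G.Walk a c}

theorem not_isFree_getVert_succ (hp : IsAltWalk M N p) {i : ℕ} (hi : i < p.length)
    (hodd : Odd i) : ¬ IsFree M (p.getVert (i + 1)) := fun hfree =>
  hfree _ (altSet_of_odd (N := N) hodd ▸ hp i hi) (Sym2.mem_mk_right _ _)

theorem concat (hp : IsAltWalk M N p) {w : V} (h : G.Adj c w)
    (hw : s(c, w) ∈ altSet M N p.length) : IsAltWalk M N (p.concat h) := by
  intro i hi
  rw [Walk.length_concat] at hi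
  rw [Walk.concat_eq_append, Walk.getVert_append', Walk.getVert_append']
  rcases Nat.lt_or_ge i p.length with hlt | hge
  · rw [if_pos hlt.le, if_pos (Nat.succ_le_of_lt hlt)]
    exact hp i hlt
  · obtain rfl : i = p.length := by omega
    simpa using hw

variable (hM : IsMatching G M) (hN : IsMatching G N)
include hM hN

theorem eq_of_getVert_eq {a' c' : V} {q : G.Walk a' c'} (hp : IsAltWalk M N p)
    (hq : IsAltWalk M N q) (ha : IsFree M a) (ha' : IsFree M a') :
    ∀ {i j : ℕ}, i ≤ p.length → j ≤ q.length → i % 2 = j % 2 →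
      p.getVert i = q.getVert j → a = a' ∧ i = j
  | 0, 0, _, _, _, h => ⟨by simpa using h, rfl⟩
  | 0, j + 1, _, hj, hij, h => by
    rw [Walk.getVert_zero] at h
    exact absurd (h ▸ ha) (hq.not_isFree_getVert_succ hj (Nat.odd_iff.2 (by omega)))
  | i + 1, 0, hi, _, hij, h => by
    rw [Walk.getVert_zero] at h
    exact absurd (h ▸ ha') (hp.not_isFree_getVert_succ hi (Nat.odd_iff.2 (by omega)))
  | i + 1, j + 1, hi, hj, hij, h => by
    have hqj : s(q.getVert j, q.getVert (j + 1)) ∈ altSet M N i := by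
      rw [altSet_congr (by omega : i % 2 = j % 2)]; exact hq j hj
    have hedge := eq_of_mem_altSet hM hN (hp i hi) hqj
      (Sym2.mem_mk_right _ _) (h ▸ Sym2.mem_mk_right _ _)
    rw [h, Sym2.congr_left] at hedge
    obtain ⟨rfl, rfl⟩ := eq_of_getVert_eq hp hq ha ha' (by omega) (by omega) (by omega) hedge
    exact ⟨rfl, rfl⟩

theorem getVert_ne_of_odd (hp : IsAltWalk M N p) :
    ∀ (n : ℕ) {i : ℕ}, i + 2 * n + 1 ≤ p.length →
      p.getVert i ≠ p.getVert (i + 2 * n + 1)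
  | 0, _, hi => (p.adj_getVert_succ (by omega)).ne
  | n + 1, i, hi => fun h => by
    have hlast :
        s(p.getVert (i + 2 * n + 2), p.getVert (i + 2 * (n + 1) + 1)) ∈ altSet M N i := by
      rw [altSet_congr (by omega : i % 2 = (i + 2 * n + 2) % 2)]; exact hp _ (by omega)
    have hedge := eq_of_mem_altSet hM hN (hp i (by omega)) hlast
      (Sym2.mem_mk_left _ _) (h ▸ Sym2.mem_mk_right _ _)
    rw [h, Sym2.eq_swap (a := p.getVert (i + 2 * n + 2)), Sym2.congr_right] at hedge
    exact getVert_ne_of_odd hp n (i := i + 1) (by omega) (by convert hedge using 2; omega)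

theorem isPath (hp : IsAltWalk M N p) (ha : IsFree M a) : p.IsPath := by
  rw [← Walk.IsPath.getVert_injOn_iff]
  intro i hi j hj h
  wlog hij : i ≤ j generalizing i j
  · exact (this hj hi h.symm (by omega)).symm
  obtain ⟨d, rfl⟩ := Nat.exists_eq_add_of_le hij
  rcases Nat.even_or_odd' d with ⟨n, rfl | rfl⟩
  · exact (eq_of_getVert_eq hM hN hp hp ha ha hi hj (by omega) h).2
  · rw [← add_assoc] at h hj
    exact (getVert_ne_of_odd hM hN hp n hj h).elim

theorem length_le (hp : IsAltWalk M N p) (ha : IsFree M a) : p.length ≤ #M + #N := by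
  classical
  have hsub : p.edges.toFinset ⊆ M ∪ N := fun e he => by
    obtain ⟨i, hi, rfl⟩ := List.mem_iff_getElem.1 (List.mem_toFinset.1 he)
    rw [Walk.getElem_edges]
    simpa using altSet_subset i (hp i (by simpa using hi))
  calc p.length = #p.edges.toFinset := by
        rw [List.toFinset_card_of_nodup (hp.isPath hM hN ha).edges_nodup, Walk.length_edges]
    _ ≤ #M + #N := (card_le_card hsub).trans (card_union_le M N)

end IsAltWalk

def IsMaxAltWalk (M N : Finset (Sym2 V)) {a c : V} (p : G.Walk a c) : Prop :=
  IsAltWalk M N p ∧ ∀ w, s(c, w) ∉ altSet M N p.length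

theorem exists_isMaxAltWalk (hM : IsMatching G M) (hN : IsMatching G N) {a : V}
    (ha : IsFree M a) : ∃ c, ∃ p : G.Walk a c, IsMaxAltWalk M N p := by
  classical
  let P : ℕ → Prop := fun n => ∃ c, ∃ p : G.Walk a c, IsAltWalk M N p ∧ p.length = n
  have hP0 : P 0 := ⟨a, Walk.nil, fun i hi => absurd hi (Nat.not_lt_zero i), rfl⟩
  obtain ⟨c, p, hp, hlen⟩ := Nat.findGreatest_spec (n := #M + #N) (Nat.zero_le _) hP0
  refine ⟨c, p, hp, fun w hw => ?_⟩
  have hq := hp.concat (adj_of_mem_altSet hM hN hw) hw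
  have := Nat.le_findGreatest (P := P) (hq.length_le hM hN ha) ⟨w, _, hq, rfl⟩
  rw [Walk.length_concat, hlen] at this
  omega

namespace IsMaxAltWalk

variable {a c : V} {p : G.Walk a c}

theorem length_pos (hp : IsMaxAltWalk M N p) {e : Sym2 V} (he : e ∈ N) (heM : e ∉ M)
    (hae : a ∈ e) : 0 < p.length := by
  by_contra h0
  have hlen : p.length = 0 := by omega
  obtain rfl := Walk.eq_of_length_eq_zero hlen
  obtain ⟨w, rfl⟩ := Sym2.mem_iff_exists.1 hae
  exact hp.2 w (by rw [hlen, altSet_of_even Even.zero]; exact ⟨he, heM⟩)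

theorem isFree_of_odd (hp : IsMaxAltWalk M N p) (hodd : Odd p.length) : IsFree M c :=
  fun e he hce => by
    obtain ⟨w, rfl⟩ := Sym2.mem_iff_exists.1 hce
    exact hp.2 w (by rw [altSet_of_odd hodd]; exact he)

theorem isAugPath (hM : IsMatching G M) (hN : IsMatching G N) (hp : IsMaxAltWalk M N p)
    (ha : IsFree M a) (hodd : Odd p.length) : IsAugPath G M p := by
  refine ⟨hp.1.isPath hM hN ha, hodd.pos, ha, hp.isFree_of_odd hodd, fun i hi => ?_⟩
  rw [List.get_eq_getElem, Walk.getElem_edges]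
  have hedge := hp.1 i (by simpa using hi)
  rcases Nat.even_or_odd i with hi' | hi'
  · rw [altSet_of_even hi'] at hedge
    exact iff_of_false hedge.2 (Nat.not_odd_iff_even.2 hi')
  · rw [altSet_of_odd hi'] at hedge
    exact iff_of_true hedge hi'

theorem mem_sdiff_of_even [DecidableEq V] (hM : IsMatching G M) (hN : IsMatching G N)
    (hp : IsMaxAltWalk M N p) (hpos : 0 < p.length) (heven : Even p.length) :
    c ∈ matchedVerts M \ matchedVerts N := by
  obtain ⟨m, hm⟩ : ∃ m, p.length = 2 * m + 2 := by
    obtain ⟨r, hr⟩ := heven; exact ⟨r - 1, by omega⟩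
  have hlast : s(p.getVert (2 * m + 1), c) ∈ M := by
    have := hp.1 (2 * m + 1) (by omega)
    rwa [altSet_of_odd (odd_two_mul_add_one m), show 2 * m + 1 + 1 = p.length by omega,
      Walk.getVert_length] at this
  refine mem_sdiff.2 ⟨mem_matchedVerts.2 ⟨_, hlast, Sym2.mem_mk_right _ _⟩, fun hcN => ?_⟩
  obtain ⟨f, hfN, hcf⟩ := mem_matchedVerts.1 hcN
  by_cases hfM : f ∈ M
  · -- then `f` is the last edge, and the edge before it is a second `N`-edge at its other end
    obtain rfl := hM.eq_of_mem_of_mem hfM hlast hcf (Sym2.mem_mk_right _ _)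
    have hprev := hp.1 (2 * m) (by omega)
    rw [altSet_of_even (even_two_mul m)] at hprev
    have := hN.eq_of_mem_of_mem hprev.1 hfN (Sym2.mem_mk_right _ _) (Sym2.mem_mk_left _ _)
    exact hprev.2 (this ▸ hfM)
  · obtain ⟨w, rfl⟩ := Sym2.mem_iff_exists.1 hcf
    exact hp.2 w (by rw [altSet_of_even heven]; exact ⟨hfN, hfM⟩)

end IsMaxAltWalk

section counting

variable [DecidableEq V] (hM : IsMatching G M) (hN : IsMatching G N) {c : V → V}
  {p : ∀ a, G.Walk a (c a)}
  (hp : ∀ a ∈ matchedVerts N \ matchedVerts M, IsMaxAltWalk M N (p a))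
include hM hN hp

theorem card_filter_even_length_le :
    #{a ∈ matchedVerts N \ matchedVerts M | Even (p a).length}
      ≤ #(matchedVerts M \ matchedVerts N) := by
  refine card_le_card_of_injOn c (fun a ha => ?_) (fun a ha a' ha' h => ?_)
  · obtain ⟨ha, heven⟩ := mem_filter.1 ha
    obtain ⟨haN, haM⟩ := mem_sdiff.1 ha
    obtain ⟨e, he, hae⟩ := mem_matchedVerts.1 haN
    have hpos := (hp a ha).length_pos he (fun heM => haM (mem_matchedVerts.2 ⟨e, heM, hae⟩)) hae
    exact (hp a ha).mem_sdiff_of_even hM hN hpos heven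
  · obtain ⟨ha, heven⟩ := mem_filter.1 ha
    obtain ⟨ha', heven'⟩ := mem_filter.1 ha'
    refine ((hp a ha).1.eq_of_getVert_eq hM hN (hp a' ha').1
      (isFree_iff_notMem_matchedVerts.2 (mem_sdiff.1 ha).2)
      (isFree_iff_notMem_matchedVerts.2 (mem_sdiff.1 ha').2) le_rfl le_rfl ?_ ?_).1
    · rw [Nat.even_iff.1 heven, Nat.even_iff.1 heven']
    · simpa using h

theorem sub_one_mul_card_filter_odd_length_le (k : ℕ)
    (hno : ∀ (a b : V) (q : G.Walk a b), IsAugPath G M q → 2 * k - 3 < q.length) :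
    (k - 1) * #{a ∈ matchedVerts N \ matchedVerts M | Odd (p a).length}
      ≤ #(matchedVerts M) := by
  have hfree {a} (ha : a ∈ matchedVerts N \ matchedVerts M) : IsFree M a :=
    isFree_iff_notMem_matchedVerts.2 (mem_sdiff.1 ha).2
  have hlt {a j} (ha : a ∈ matchedVerts N \ matchedVerts M) (hodd : Odd (p a).length)
      (hj : j < k - 1) : 2 * j + 1 < (p a).length := by
    have := hno _ _ _ ((hp a ha).isAugPath hM hN (hfree ha) hodd)
    obtain ⟨r, hr⟩ := hodd
    omega
  rw [mul_comm, ← card_range (k - 1), ← card_product]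
  refine card_le_card_of_injOn (fun x => (p x.1).getVert (2 * x.2 + 1))
    (fun ⟨a, j⟩ hx => ?_) (fun ⟨a, j⟩ hx ⟨a', j'⟩ hx' h => ?_)
  all_goals simp only [coe_product, Set.mem_prod, mem_coe, mem_filter, mem_range] at *
  · obtain ⟨⟨ha, hodd⟩, hj⟩ := hx
    have hedge := (hp a ha).1 (2 * j + 1) (hlt ha hodd hj)
    rw [altSet_of_odd (odd_two_mul_add_one j)] at hedge
    exact mem_matchedVerts.2 ⟨_, hedge, Sym2.mem_mk_left _ _⟩
  · obtain ⟨⟨ha, hodd⟩, hj⟩ := hx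
    obtain ⟨⟨ha', hodd'⟩, hj'⟩ := hx'
    obtain ⟨rfl, hjj⟩ := (hp a ha).1.eq_of_getVert_eq hM hN (hp a' ha').1 (hfree ha) (hfree ha')
      (hlt ha hodd hj).le (hlt ha' hodd' hj').le (by omega) h
    rw [show j = j' by omega]

end counting

theorem IsMatching.sub_one_mul_card_le (hM : IsMatching G M) (hN : IsMatching G N) (k : ℕ)
    (hno : ∀ (a b : V) (p : G.Walk a b), IsAugPath G M p → 2 * k - 3 < p.length) :
    (k - 1) * #N ≤ k * #M := by
  classical
  have hwalk (a : V) : ∃ c, ∃ p : G.Walk a c,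
      a ∈ matchedVerts N \ matchedVerts M → IsMaxAltWalk M N p := by
    by_cases ha : a ∈ matchedVerts N \ matchedVerts M
    · obtain ⟨c, p, hp⟩ :=
        exists_isMaxAltWalk hM hN (isFree_iff_notMem_matchedVerts.2 (mem_sdiff.1 ha).2)
      exact ⟨c, p, fun _ => hp⟩
    · exact ⟨a, Walk.nil, fun h => absurd h ha⟩
  choose c p hp using hwalk
  have hN2 :
      #(matchedVerts N \ matchedVerts M) + #(matchedVerts N ∩ matchedVerts M) = 2 * #N := by
    rw [card_sdiff_add_card_inter, hN.card_matchedVerts]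
  have hM2 :
      #(matchedVerts M \ matchedVerts N) + #(matchedVerts N ∩ matchedVerts M) = 2 * #M := by
    rw [inter_comm, card_sdiff_add_card_inter, hM.card_matchedVerts]
  have hsplit := card_filter_add_card_filter_not
    (s := matchedVerts N \ matchedVerts M) (fun a => Even (p a).length)
  simp only [Nat.not_even_iff_odd] at hsplit
  have heven := card_filter_even_length_le hM hN hp
  have hodd := sub_one_mul_card_filter_odd_length_le hM hN hp k hno
  rw [hM.card_matchedVerts] at hodd
  obtain _ | k := k
  · simp
  · simp only [Nat.add_sub_cancel] at hodd ⊢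
    nlinarith

end

theorem no_short_aug_path_approx_general {V : Type*} (G : SimpleGraph V)
    (M Mopt : Finset (Sym2 V)) (k : ℕ)
    (hM : IsMatching G M) (hopt : IsMaximumMatching G Mopt)
    (hno : ∀ (a b : V) (p : G.Walk a b), IsAugPath G M p → 2 * k - 3 < p.length) :
    (k - 1) * Mopt.card ≤ k * M.card :=
  hM.sub_one_mul_card_le hopt.1 k hno

/-- Hopcroft–Karp: if a matching has no augmenting path of length at most
`2k-3`, then it is a `k/(k-1)`-approximate maximum matching. -/
theorem no_short_aug_path_approx {V : Type*} (G : SimpleGraph V)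
    (M Mopt : Finset (Sym2 V)) (k : ℕ) (hk : 2 ≤ k)
    (hM : IsMatching G M) (hopt : IsMaximumMatching G Mopt)
    (hno : ∀ (a b : V) (p : G.Walk a b), IsAugPath G M p → 2 * k - 3 < p.length) :
    (k - 1) * Mopt.card ≤ k * M.card :=
  no_short_aug_path_approx_general G M Mopt k hM hopt hno
end

section
/- If a matching M in a graph G has no augmenting paths of length 1 or 3, then |M| ≥ (2/3)·|M_opt|; i.e., M is a 3/2-approximate maximum matching. -/
open Finset

lemma aug1 {V : Type*} {G : SimpleGraph V} {M : Finset (Sym2 V)} {a b : V}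
    (h1 : G.Adj a b) (ha : IsFree M a) (hb : IsFree M b) (hm : s(a,b) ∉ M) :
    ∃ p : G.Walk a b, IsAugPath G M p ∧ p.length = 1 := by
  refine ⟨.cons h1 .nil, ⟨?_, ?_, ha, hb, ?_⟩, rfl⟩
  · simp [SimpleGraph.Walk.isPath_def, h1.ne]
  · simp
  · intro i hi
    simp only [SimpleGraph.Walk.edges_cons, SimpleGraph.Walk.edges_nil, List.length_cons,
      List.length_nil] at hi ⊢
    interval_cases i <;> simp [hm, Nat.odd_iff]

lemma aug3 {V : Type*} {G : SimpleGraph V} {M : Finset (Sym2 V)} {a u v b : V}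
    (h1 : G.Adj a u) (h2 : G.Adj u v) (h3 : G.Adj v b)
    (hav : a ≠ v) (hab : a ≠ b) (hub : u ≠ b)
    (ha : IsFree M a) (hb : IsFree M b)
    (e1 : s(a,u) ∉ M) (e2 : s(u,v) ∈ M) (e3 : s(v,b) ∉ M) :
    ∃ p : G.Walk a b, IsAugPath G M p ∧ p.length = 3 := by
  refine ⟨.cons h1 (.cons h2 (.cons h3 .nil)), ⟨?_, ?_, ha, hb, ?_⟩, rfl⟩
  · simp [SimpleGraph.Walk.isPath_def, h1.ne, h2.ne, h3.ne, hav, hab, hub]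
  · simp
  · intro i hi
    simp only [SimpleGraph.Walk.edges_cons, SimpleGraph.Walk.edges_nil, List.length_cons,
      List.length_nil] at hi ⊢
    interval_cases i <;> simp [e1, e2, e3, Nat.odd_iff]

lemma sym2_eq_of_two_mem {V : Type*} {x y : V} {e : Sym2 V}
    (hx : x ∈ e) (hy : y ∈ e) (hxy : x ≠ y) : e = s(x, y) := by
  induction e using Sym2.ind with
  | _ u v =>
    rcases Sym2.mem_iff.mp hx with h1 | h1 <;> rcases Sym2.mem_iff.mp hy with h2 | h2 <;>
      subst h1 <;> subst h2 <;> simp_all [Sym2.eq_swap]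

/-- A matching with no augmenting paths of length 1 or 3 is a
3/2-approximate maximum matching. -/
theorem no_len_one_three_aug_paths {V : Type*} (G : SimpleGraph V)
    (M Mopt : Finset (Sym2 V))
    (hM : IsMatching G M) (hopt : IsMaximumMatching G Mopt)
    (hno : ∀ (a b : V) (p : G.Walk a b), IsAugPath G M p →
      p.length ≠ 1 ∧ p.length ≠ 3) :
    2 * Mopt.card ≤ 3 * M.card := by
  classical
  obtain ⟨hoptM, -⟩ := hopt
  set M' : Finset (Sym2 V) := Mopt \ M with hM'def
  set M'' : Finset (Sym2 V) := M \ Mopt with hM''def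
  have hM'sub : ∀ f ∈ M', f ∈ Mopt ∧ f ∉ M := fun f hf => Finset.mem_sdiff.mp hf
  have hM''sub : ∀ e ∈ M'', e ∈ M ∧ e ∉ Mopt := fun e he => Finset.mem_sdiff.mp he
  -- if a vertex of an M' edge is covered by an M edge g, then g ∈ M''
  have cover : ∀ f ∈ M', ∀ w, w ∈ f → ∀ g ∈ M, w ∈ g → g ∈ M'' := by
    intro f hf w hw g hg hwg
    obtain ⟨hfo, hfm⟩ := hM'sub f hf
    refine Finset.mem_sdiff.mpr ⟨hg, fun hgo => ?_⟩
    have hne : g ≠ f := fun h => hfm (h ▸ hg)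
    exact hoptM.2 g hgo f hfo hne w hwg hw
  have free_of : ∀ f ∈ M', ∀ w, w ∈ f → (∀ e ∈ M'', w ∉ e) → IsFree M w := by
    intro f hf w hw h g hg hwg
    exact h g (cover f hf w hw g hg hwg) hwg
  set T : Sym2 V → Sym2 V → Prop := fun f e => ∃ w, w ∈ f ∧ w ∈ e with hTdef
  set c : Sym2 V → ℕ := fun f => (M''.filter (fun e => T f e)).card with hcdef
  -- each f ∈ M' touches at least one e ∈ M''  (else a length-1 augmenting path)
  have row1 : ∀ f ∈ M', 1 ≤ c f := by
    intro f hf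
    rw [hcdef, Nat.one_le_iff_ne_zero, ← Nat.pos_iff_ne_zero, Finset.card_pos]
    by_contra hemp
    rw [Finset.not_nonempty_iff_eq_empty] at hemp
    have huntouched : ∀ w, w ∈ f → ∀ e ∈ M'', w ∉ e := by
      intro w hw e he hwe
      have : e ∈ M''.filter (fun e => T f e) := Finset.mem_filter.mpr ⟨he, w, hw, hwe⟩
      simp [hemp] at this
    induction f using Sym2.ind with
    | _ x y =>
      have hadj : G.Adj x y := (SimpleGraph.mem_edgeSet G).mp (hoptM.1 _ (hM'sub _ hf).1)
      have hx : IsFree M x := free_of _ hf x (by simp) (huntouched x (by simp))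
      have hy : IsFree M y := free_of _ hf y (by simp) (huntouched y (by simp))
      obtain ⟨p, hp, hlen⟩ := aug1 hadj hx hy (hM'sub _ hf).2
      exact (hno x y p hp).1 hlen
  -- column bound: each e ∈ M'' is touched by at most 2 edges of M'
  have col2 : ∀ e ∈ M'', (M'.filter (fun f => T f e)).card ≤ 2 := by
    intro e he
    induction e using Sym2.ind with
    | _ u v =>
      have hle : (M'.filter (fun f => T f s(u,v))).card ≤ ({u, v} : Finset V).card := by
        apply Finset.card_le_card_of_injOn (fun f => if u ∈ f then u else v)
        · intro f hf
          by_cases h : u ∈ f <;> simp [h]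
        · intro f1 hf1 f2 hf2 heq
          obtain ⟨hf1m, w1, hw1f, hw1e⟩ := Finset.mem_filter.mp hf1
          obtain ⟨hf2m, w2, hw2f, hw2e⟩ := Finset.mem_filter.mp hf2
          have key : ∀ (f : Sym2 V), f ∈ M'.filter (fun f => T f s(u,v)) →
              (if u ∈ f then u else v) ∈ f := by
            intro f hf
            obtain ⟨hfm, w, hwf, hwe⟩ := Finset.mem_filter.mp hf
            by_cases h : u ∈ f
            · simpa [h]
            · simp only [h, if_false]
              rcases Sym2.mem_iff.mp hwe with h1 | h1 <;> subst h1
              · exact absurd hwf h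
              · exact hwf
          have k1 := key f1 hf1
          have k2 := key f2 hf2
          simp only at heq
          rw [heq] at k1
          by_contra hne
          exact hoptM.2 f1 (hM'sub _ hf1m).1 f2 (hM'sub _ hf2m).1 hne _ k1 k2
      exact hle.trans ((Finset.card_insert_le _ _).trans (by simp))
  -- double counting
  set S : ℕ := ∑ f ∈ M', c f with hSdef
  have hS_col : S = ∑ e ∈ M'', (M'.filter (fun f => T f e)).card := by
    simp only [hSdef, hcdef, Finset.card_filter]
    exact Finset.sum_comm
  have hS2m : S ≤ 2 * M''.card := by
    rw [hS_col]
    calc ∑ e ∈ M'', (M'.filter (fun f => T f e)).card ≤ ∑ _e ∈ M'', 2 :=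
          Finset.sum_le_sum col2
      _ = 2 * M''.card := by rw [Finset.sum_const, smul_eq_mul, mul_comm]
  -- K1 : edges of M' touching exactly one M'' edge
  set K1 : Finset (Sym2 V) := M'.filter (fun f => c f ≤ 1) with hK1def
  -- the key injection K1 → M'' : no two K1 edges touch the same M'' edge
  have hK1m : K1.card ≤ M''.card := by
    set φ : Sym2 V → Sym2 V := fun f =>
      if h : (M''.filter (fun e => T f e)).Nonempty then h.choose else f with hφdef
    have hφ_mem : ∀ f ∈ K1, φ f ∈ M''.filter (fun e => T f e) := by
      intro f hf
      obtain ⟨hfM', hc1⟩ := Finset.mem_filter.mp hf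
      have hne : (M''.filter (fun e => T f e)).Nonempty :=
        Finset.card_pos.mp (row1 f hfM')
      simp only [hφdef, dif_pos hne]
      exact hne.choose_spec
    have hφ_uniq : ∀ f ∈ K1, ∀ e ∈ M''.filter (fun e => T f e), e = φ f := by
      intro f hf e he
      exact Finset.card_le_one.mp (Finset.mem_filter.mp hf).2 e he (φ f) (hφ_mem f hf)
    apply Finset.card_le_card_of_injOn φ
    · intro f hf
      exact (Finset.mem_filter.mp (hφ_mem f hf)).1
    · -- injectivity via no length-3 augmenting path
      intro f1 hf1 f2 hf2 heq
      by_contra hne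
      set e := φ f1 with hedef
      have he1 := hφ_mem f1 hf1
      have he2' := hφ_mem f2 hf2
      rw [← heq] at he2'
      obtain ⟨heM'', w1, hw1f, hw1e⟩ := Finset.mem_filter.mp he1
      obtain ⟨-, w2, hw2f, hw2e⟩ := Finset.mem_filter.mp he2'
      have hf1M' := (Finset.mem_filter.mp hf1).1
      have hf2M' := (Finset.mem_filter.mp hf2).1
      have heM : e ∈ M := (hM''sub _ heM'').1
      have heG : e ∈ G.edgeSet := hM.1 _ heM
      -- the two touch points are distinct
      have hw12 : w1 ≠ w2 := by
        intro h; subst h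
        exact hoptM.2 f1 (hM'sub _ hf1M').1 f2 (hM'sub _ hf2M').1 hne w1 hw1f hw2f
      have hee : e = s(w1, w2) := sym2_eq_of_two_mem hw1e hw2e hw12
      -- other endpoint of a K1 edge touching e at x is free
      have hother : ∀ f ∈ K1, φ f = e → ∀ x y : V, f = s(x, y) → x ∈ e →
          IsFree M y ∧ G.Adj x y ∧ s(x,y) ∉ M := by
        intro f hf hφf x y hfxy hxe
        have hfM' := (Finset.mem_filter.mp hf).1
        have hfG : f ∈ G.edgeSet := hoptM.1 _ (hM'sub _ hfM').1
        have hadj : G.Adj x y := (SimpleGraph.mem_edgeSet G).mp (hfxy ▸ hfG)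
        have hfnM : s(x,y) ∉ M := hfxy ▸ (hM'sub _ hfM').2
        refine ⟨?_, hadj, hfnM⟩
        apply free_of f hfM' y (by rw [hfxy]; simp)
        intro g hg hyg
        -- the M'' edge g touches f, so by uniqueness g = φ f = φ f1 = e
        have hgfil : g ∈ M''.filter (fun e' => T f e') :=
          Finset.mem_filter.mpr ⟨hg, y, by rw [hfxy]; simp, hyg⟩
        have hge : g = e := (hφ_uniq f hf g hgfil).trans hφf
        rw [hge] at hyg
        -- then x, y ∈ e, x ≠ y, so f = e, contradicting f ∉ M ∋ e
        have hxy : x ≠ y := fun h => (G.irrefl (h ▸ hadj))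
        have hexy : e = s(x, y) := sym2_eq_of_two_mem hxe hyg hxy
        exact hfnM (hexy ▸ heM)
      -- decompose f1 = s(w1, a), f2 = s(w2, b)
      obtain ⟨a, ha⟩ : ∃ a, f1 = s(w1, a) :=
        ⟨Sym2.Mem.other' hw1f, (Sym2.other_spec' hw1f).symm⟩
      obtain ⟨b, hb⟩ : ∃ b, f2 = s(w2, b) :=
        ⟨Sym2.Mem.other' hw2f, (Sym2.other_spec' hw2f).symm⟩
      obtain ⟨hafree, haadj, hanM⟩ := hother f1 hf1 hedef.symm w1 a ha hw1e
      obtain ⟨hbfree, hbadj, hbnM⟩ := hother f2 hf2 heq.symm w2 b hb hw2e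
      -- distinctness
      have hav : a ≠ w2 := by
        intro h; subst h
        exact hafree e heM hw2e
      have hub : w1 ≠ b := by
        intro h; subst h
        exact hbfree e heM hw1e
      have hab : a ≠ b := by
        intro h; subst h
        exact hoptM.2 f1 (hM'sub _ hf1M').1 f2 (hM'sub _ hf2M').1 hne a
          (by rw [ha]; simp) (by rw [hb]; simp)
      have hadj2 : G.Adj w1 w2 := (SimpleGraph.mem_edgeSet G).mp (hee ▸ heG)
      obtain ⟨p, hp, hlen⟩ := aug3 haadj.symm hadj2 hbadj hav hab hub hafree hbfree
        (by rw [Sym2.eq_swap]; exact hanM) (hee ▸ heM) hbnM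
      exact (hno a b p hp).2 hlen
  -- row lower bound: 2 * M'.card ≤ S + K1.card
  have hrow : 2 * M'.card ≤ S + K1.card := by
    have step : ∀ f ∈ M', 2 ≤ c f + (if c f ≤ 1 then 1 else 0) := by
      intro f hf
      have h1 := row1 f hf
      by_cases h : c f ≤ 1
      · simp only [h, if_true]; omega
      · simp only [h, if_false]; omega
    calc 2 * M'.card = ∑ _f ∈ M', 2 := by rw [Finset.sum_const, smul_eq_mul, mul_comm]
      _ ≤ ∑ f ∈ M', (c f + if c f ≤ 1 then 1 else 0) := Finset.sum_le_sum step
      _ = S + K1.card := by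
          rw [Finset.sum_add_distrib, hK1def, Finset.card_filter]
  -- put everything together
  have hkey : 2 * M'.card ≤ 3 * M''.card := by omega
  have h1 : M'.card + (Mopt ∩ M).card = Mopt.card := Finset.card_sdiff_add_card_inter _ _
  have h2 : M''.card + (M ∩ Mopt).card = M.card := Finset.card_sdiff_add_card_inter _ _
  have h3 : (Mopt ∩ M).card = (M ∩ Mopt).card := by rw [Finset.inter_comm]
  omega
end

section
/- Let M be a maximum matching of a graph G and let G' = G + e be obtained by inserting a single edge e = (u,v). If M is not a maximum matching of G', then every augmenting path in G' with respect to M uses the edge e; moreover, augmenting along any such path yields a maximum matching of G'. -/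
/-! Augmenting along an augmenting path of a matching gives a matching with one more edge, so a
maximum matching of `G` has no augmenting path in `G`; hence every augmenting path in `G + e`
uses `e`. On the other hand, removing `e` from a matching of `G + e` leaves a matching of `G`, so
the maximum matching size grows by at most one when `e` is inserted, and one augmentation
restores maximality. -/

open Finset

open SimpleGraph

section Matching

variable {V : Type*} {H H' : SimpleGraph V} {M N : Finset (Sym2 V)}

namespace IsMatching

theorem subset (hM : IsMatching H M) (hNM : N ⊆ M) : IsMatching H N :=
  ⟨fun e he => hM.1 e (hNM he), fun e he f hf => hM.2 e (hNM he) f (hNM hf)⟩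

theorem mono (hM : IsMatching H M) (hH : H ≤ H') : IsMatching H' M :=
  ⟨fun e he => edgeSet_mono hH (hM.1 e he), hM.2⟩

variable [DecidableEq V]

theorem insert {e : Sym2 V} (hM : IsMatching H M) (he : e ∈ H.edgeSet)
    (hfree : ∀ w ∈ e, IsFree M w) : IsMatching H (insert e M) := by
  refine ⟨fun f hf => ?_, fun f hf g hg hfg w hwf hwg => ?_⟩
  · rcases Finset.mem_insert.1 hf with rfl | hf
    exacts [he, hM.1 f hf]
  rcases Finset.mem_insert.1 hf with rfl | hfM <;> rcases Finset.mem_insert.1 hg with rfl | hgM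
  · exact hfg rfl
  · exact hfree w hwf g hgM hwg
  · exact hfree w hwg f hfM hwf
  · exact hM.2 f hfM g hgM hfg w hwf hwg

theorem isFree_erase {e : Sym2 V} (hM : IsMatching H M) (he : e ∈ M) {w : V} (hw : w ∈ e) :
    IsFree (M.erase e) w := fun f hf hwf =>
  hM.2 e he f (Finset.mem_of_mem_erase hf) (Finset.ne_of_mem_erase hf).symm w hw hwf

end IsMatching

theorem IsFree.subset {w : V} (hw : IsFree M w) (hNM : N ⊆ M) : IsFree N w :=
  fun f hf => hw f (hNM hf)

theorem IsFree.symmDiff_edges [DecidableEq V] {w a b : V} (hw : IsFree M w) (p : H.Walk a b)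
    (hwp : w ∉ p.support) : IsFree (symmDiff M p.edges.toFinset) w := by
  intro f hf hwf
  rcases Finset.mem_symmDiff.1 hf with ⟨hfM, -⟩ | ⟨hfp, -⟩
  · exact hw f hfM hwf
  · exact hwp (Walk.mem_support_of_mem_edges (List.mem_toFinset.1 hfp) hwf)

theorem Finset.symmDiff_singleton_of_notMem {α : Type*} [DecidableEq α] {s : Finset α} {a : α}
    (ha : a ∉ s) : symmDiff s {a} = insert a s := by
  ext x
  by_cases hxa : x = a
  · subst hxa; simp [Finset.mem_symmDiff, ha]
  simp [Finset.mem_symmDiff, hxa]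

theorem Finset.symmDiff_insert_insert {α : Type*} [DecidableEq α] {s t : Finset α} {a b : α}
    (has : a ∉ s) (hbs : b ∈ s) (hbt : b ∉ t) :
    symmDiff s (insert a (insert b t)) = insert a (symmDiff (s.erase b) t) := by
  have hab : a ≠ b := fun h => has (h ▸ hbs)
  ext x
  by_cases hxa : x = a
  · subst hxa; simp [Finset.mem_symmDiff, has]
  by_cases hxb : x = b
  · subst hxb; simp [Finset.mem_symmDiff, hbs, hbt, Ne.symm hab]
  simp [Finset.mem_symmDiff, hxa, hxb]

namespace IsAugPath

theorem transfer {a b : V} {p : H.Walk a b} (hp : IsAugPath H M p)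
    (hpH' : ∀ e ∈ p.edges, e ∈ H'.edgeSet) : IsAugPath H' M (p.transfer H' hpH') := by
  obtain ⟨hpath, hlen, ha, hb, halt⟩ := hp
  refine ⟨hpath.transfer hpH', by rwa [Walk.length_transfer], ha, hb, ?_⟩
  rw [Walk.edges_transfer]
  exact halt

theorem cons_cons [DecidableEq V] {a x y b : V} {h : H.Adj a x} {h' : H.Adj x y}
    {r : H.Walk y b} (hM : IsMatching H M) (hp : IsAugPath H M (.cons h (.cons h' r))) :
    s(a, x) ∉ M ∧ s(x, y) ∈ M ∧ IsAugPath H (M.erase s(x, y)) r := by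
  obtain ⟨hpath, -, -, hb, halt⟩ := hp
  obtain ⟨hr, hxr⟩ := (Walk.cons_isPath_iff _ _).1 ((Walk.cons_isPath_iff _ _).1 hpath).1
  have hax : s(a, x) ∉ M := by simpa using halt 0 (by simp)
  have hxy : s(x, y) ∈ M := by simpa using halt 1 (by simp)
  refine ⟨hax, hxy, hr, ?_, hM.isFree_erase hxy (Sym2.mem_mk_right x y),
    hb.subset (Finset.erase_subset _ _), fun i hi => ?_⟩
  · -- `y` is matched by `s(x, y)` while `b` is free, so `r` is not empty.
    refine Nat.pos_of_ne_zero fun hr0 => ?_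
    obtain rfl := Walk.eq_of_length_eq_zero hr0
    exact hb _ hxy (Sym2.mem_mk_right x y)
  · have hne : r.edges[i] ≠ s(x, y) := fun heq =>
      hxr (r.fst_mem_support_of_mem_edges (heq ▸ List.getElem_mem hi))
    have := halt (i + 2) (by simpa using hi)
    simp only [Walk.edges_cons, List.get_eq_getElem, List.getElem_cons_succ] at this
    simp [Finset.mem_erase, this, hne, Nat.odd_add]

theorem isMatching_symmDiff_and_card_eq [DecidableEq V] (hM : IsMatching H M) {a b : V}
    {p : H.Walk a b} (hp : IsAugPath H M p) :
    IsMatching H (symmDiff M p.edges.toFinset) ∧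
      (symmDiff M p.edges.toFinset).card = M.card + 1 := by
  induction hn : p.length using Nat.strong_induction_on generalizing M a p with
  | _ n ih =>
  match p, hp with
  | .nil, hp => exact absurd hp.2.1 (lt_irrefl 0)
  | .cons h .nil, hp =>
    have hab : s(a, b) ∉ M := by simpa using hp.2.2.2.2 0 (by simp)
    have hfree : ∀ w ∈ s(a, b), IsFree M w := by
      simpa only [Sym2.mem_iff, forall_eq_or_imp, forall_eq] using ⟨hp.2.2.1, hp.2.2.2.1⟩
    simp only [Walk.edges_cons, Walk.edges_nil, List.toFinset_cons, List.toFinset_nil,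
      insert_empty, Finset.symmDiff_singleton_of_notMem hab]
    exact ⟨hM.insert h hfree, Finset.card_insert_of_notMem hab⟩
  | .cons (v := x) h (.cons (v := y) h' r), hp =>
    obtain ⟨hax, hxy, hr⟩ := hp.cons_cons hM
    obtain ⟨hN, hNcard⟩ :=
      ih r.length (by simp [← hn]) (hM.subset (Finset.erase_subset _ _)) hr rfl
    obtain ⟨hpath, -, ha, -⟩ := hp
    obtain ⟨hxpath, hra⟩ := (Walk.cons_isPath_iff _ _).1 hpath
    have hrx : x ∉ r.support := ((Walk.cons_isPath_iff _ _).1 hxpath).2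
    replace hra : a ∉ r.support := fun har => hra (by simp [har])
    have hfree : ∀ w ∈ s(a, x), IsFree (symmDiff (M.erase s(x, y)) r.edges.toFinset) w := by
      simp only [Sym2.mem_iff, forall_eq_or_imp, forall_eq]
      exact ⟨(ha.subset (Finset.erase_subset _ _)).symmDiff_edges r hra,
        (hM.isFree_erase hxy (Sym2.mem_mk_left x y)).symmDiff_edges r hrx⟩
    have hxyr : s(x, y) ∉ r.edges.toFinset := fun hmem =>
      hrx (Walk.mem_support_of_mem_edges (List.mem_toFinset.1 hmem) (Sym2.mem_mk_left x y))
    simp only [Walk.edges_cons, List.toFinset_cons, Finset.symmDiff_insert_insert hax hxy hxyr]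
    refine ⟨hN.insert h hfree, ?_⟩
    rw [Finset.card_insert_of_notMem fun hmem => hfree a (Sym2.mem_mk_left a x) _ hmem
      (Sym2.mem_mk_left a x), hNcard, Finset.card_erase_add_one hxy]

end IsAugPath

theorem IsMaximumMatching.not_isAugPath [DecidableEq V] (hM : IsMaximumMatching H M) {a b : V}
    (p : H.Walk a b) : ¬ IsAugPath H M p := fun hp => by
  obtain ⟨hN, hcard⟩ := hp.isMatching_symmDiff_and_card_eq hM.1
  have := hM.2 _ hN
  omega

theorem mem_edgeSet_of_mem_edgeSet_sup_fromEdgeSet {e f : Sym2 V}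
    (hf : f ∈ (H ⊔ fromEdgeSet {e}).edgeSet) (hfe : f ≠ e) : f ∈ H.edgeSet := by
  simp only [edgeSet_sup, edgeSet_fromEdgeSet, Set.mem_union, Set.mem_sdiff,
    Set.mem_singleton_iff] at hf
  tauto

theorem IsMaximumMatching.card_le_of_isMatching_sup_fromEdgeSet [DecidableEq V] {e : Sym2 V}
    (hM : IsMaximumMatching H M) (hN : IsMatching (H ⊔ fromEdgeSet {e}) N) :
    N.card ≤ M.card + 1 := by
  have hNe : IsMatching H (N.erase e) := ⟨fun f hf => mem_edgeSet_of_mem_edgeSet_sup_fromEdgeSet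
    (hN.1 f (Finset.mem_of_mem_erase hf)) (Finset.ne_of_mem_erase hf),
    (hN.subset (Finset.erase_subset _ _)).2⟩
  have := hM.2 _ hNe
  have := Finset.pred_card_le_card_erase (s := N) (a := e)
  omega

end Matching

theorem insert_edge_aug_path_general {V : Type*} [DecidableEq V] (G : SimpleGraph V)
    (M : Finset (Sym2 V)) (u v : V)
    (hM : IsMaximumMatching G M)
    (G' : SimpleGraph V) (hG' : G' = G ⊔ SimpleGraph.fromEdgeSet {s(u, v)}) :
    (∀ (a b : V) (p : G'.Walk a b), IsAugPath G' M p → s(u, v) ∈ p.edges) ∧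
    (∀ (a b : V) (p : G'.Walk a b), IsAugPath G' M p →
      IsMaximumMatching G' (symmDiff M p.edges.toFinset)) := by
  subst hG'
  refine ⟨fun a b p hp => ?_, fun a b p hp => ?_⟩
  · by_contra huv
    have hpG : ∀ f ∈ p.edges, f ∈ G.edgeSet := fun f hf =>
      mem_edgeSet_of_mem_edgeSet_sup_fromEdgeSet (p.edges_subset_edgeSet hf)
        fun hfe => huv (hfe ▸ hf)
    exact hM.not_isAugPath _ (hp.transfer hpG)
  · obtain ⟨hN, hcard⟩ := hp.isMatching_symmDiff_and_card_eq (hM.1.mono le_sup_left)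
    exact ⟨hN, fun N hN' => hcard ▸ hM.card_le_of_isMatching_sup_fromEdgeSet hN'⟩

/-- Edge insertion into a graph with a maximum matching: if the matching is no
longer maximum in `G + e`, then every augmenting path in `G + e` uses `e`,
and augmenting along any such path yields a maximum matching of `G + e`. -/
theorem insert_edge_aug_path {V : Type*} [DecidableEq V] (G : SimpleGraph V)
    (M : Finset (Sym2 V)) (u v : V) (huv : u ≠ v) (hne : ¬ G.Adj u v)
    (hM : IsMaximumMatching G M)
    (G' : SimpleGraph V) (hG' : G' = G ⊔ SimpleGraph.fromEdgeSet {s(u, v)})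
    (hnotmax : ¬ IsMaximumMatching G' M) :
    (∀ (a b : V) (p : G'.Walk a b), IsAugPath G' M p → s(u, v) ∈ p.edges) ∧
    (∀ (a b : V) (p : G'.Walk a b), IsAugPath G' M p →
      IsMaximumMatching G' (symmDiff M p.edges.toFinset)) :=
  insert_edge_aug_path_general G M u v hM G' hG'
end

section
/- If M is a maximal matching of G and a matched edge (u,v) is deleted, then after attempting to match u and v to free neighbors (matching each to an arbitrary free neighbor if one exists), the resulting matching is again maximal in G − (u,v). -/
open Finset

/-- Deleting a matched edge `(u,v)` from a maximal matching and repairing by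
matching `u` and `v` to free neighbors (whenever such exist) again yields a
maximal matching of `G - (u,v)`. The matching `M₂` is any outcome of the
repair step: it extends `M \ {(u,v)}` only by edges incident to `u` or `v`,
and after the repair a still-free `u` (resp. `v`) has no free neighbor. -/
theorem delete_edge_repair_maximal {V : Type*} [DecidableEq V]
    (G : SimpleGraph V) (M : Finset (Sym2 V)) (u v : V)
    (hmax : IsMaximalMatching G M) (he : s(u, v) ∈ M)
    (M₂ : Finset (Sym2 V))
    (hsub : M.erase s(u, v) ⊆ M₂)
    (hmatch : IsMatching (G.deleteEdges {s(u, v)}) M₂)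
    (hnew : ∀ e ∈ M₂, e ∉ M.erase s(u, v) → u ∈ e ∨ v ∈ e)
    (hu : IsFree M₂ u → ∀ w : V, (G.deleteEdges {s(u, v)}).Adj u w → ¬ IsFree M₂ w)
    (hv : IsFree M₂ v → ∀ w : V, (G.deleteEdges {s(u, v)}).Adj v w → ¬ IsFree M₂ w) :
    IsMaximalMatching (G.deleteEdges {s(u, v)}) M₂ := by
  refine ⟨hmatch, ?_⟩
  intro e heG
  by_contra hcon
  push_neg at hcon
  -- both endpoints of e are free in M₂
  induction e using Sym2.inductionOn with
  | hf a b =>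
  have haf : IsFree M₂ a := by
    have := hcon a (by simp)
    simpa using this
  have hbf : IsFree M₂ b := by
    have := hcon b (by simp)
    simpa using this
  -- e is in G and e ≠ s(u,v)
  rw [SimpleGraph.edgeSet_deleteEdges, Set.mem_diff] at heG
  obtain ⟨heG', hene⟩ := heG
  have hadj : (G.deleteEdges {s(u, v)}).Adj a b := by
    rw [SimpleGraph.deleteEdges_adj]
    exact ⟨heG', by simpa using hene⟩
  -- free in M.erase s(u,v)
  have key : ∀ x : V, x ∈ (s(a, b) : Sym2 V) → ¬ IsFree M x → x = u ∨ x = v := by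
    intro x hx hnf
    simp only [IsFree, not_forall] at hnf
    obtain ⟨f, hfM, hxf⟩ := hnf
    simp only [not_not] at hxf
    by_cases hfu : f = s(u, v)
    · subst hfu
      simpa using hxf
    · exfalso
      have hfM₂ : f ∈ M₂ := hsub (Finset.mem_erase.mpr ⟨hfu, hfM⟩)
      rcases Sym2.mem_iff.mp hx with rfl | rfl
      · exact haf f hfM₂ hxf
      · exact hbf f hfM₂ hxf
  obtain ⟨x, hx, hnf⟩ := hmax.2 s(a, b) heG'
  rcases key x hx hnf with rfl | rfl
  · rcases Sym2.mem_iff.mp hx with h | h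
    · subst h; exact hu haf b hadj hbf
    · subst h; exact hu hbf a hadj.symm haf
  · rcases Sym2.mem_iff.mp hx with h | h
    · subst h; exact hv haf b hadj hbf
    · subst h; exact hv hbf a hadj.symm haf
end
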